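/- arXiv:2107.09790 — 2 statements merged into one kernel-verified Lean document; each statement's English description precedes it below -/
import Mathlib

section
/- Let d ≥ 2 and let γ = ⟨γ_1,…,γ_b⟩ be a sequence of positive integers with γ_1 = γ_b. Then for every n ≥ 1, α_{T^{(d)}_{γ^{⊗n}}} ≤ α_{T^{(d)}_γ}. -/
noncomputable section
open Classical

/-! ### Graph-metric notions -/

/-- The graph ball of radius `R` (an integer) around `x` in the path metric. -/
def gBall {V : Type*} (G : SimpleGraph V) (x : V) (R : ℕ) : Set V :=
  {y | G.dist x y ≤ R}

/-- The graph ball of real radius `r` around `x` in the path metric. -/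
def gBallReal {V : Type*} (G : SimpleGraph V) (x : V) (r : ℝ) : Set V :=
  {y | (G.dist x y : ℝ) ≤ r}

/-- The graph sphere of radius `R` around `x` in the path metric. -/
def gSphere {V : Type*} (G : SimpleGraph V) (x : V) (R : ℕ) : Set V :=
  {y | G.dist x y = R}

/-- The diameter (in the path metric) of a set `S` of vertices, as a real number. -/
def graphSetDiam {V : Type*} (G : SimpleGraph V) (S : Set V) : ℝ :=
  sSup {r : ℝ | ∃ x ∈ S, ∃ y ∈ S, r = (G.dist x y : ℝ)}

/-- `G` contains (at least) `n` pairwise vertex-disjoint paths, each with one endpoint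
in `S` and the other endpoint in `T`. -/
def HasDisjointPathsBetween {V : Type*} (G : SimpleGraph V) (S T : Set V) (n : ℕ) : Prop :=
  ∃ (u v : Fin n → V) (p : ∀ i, G.Walk (u i) (v i)),
    (∀ i, (p i).IsPath) ∧ (∀ i, u i ∈ S) ∧ (∀ i, v i ∈ T) ∧
    ∀ i j, i ≠ j → List.Disjoint (p i).support (p j).support

/-! ### Subdivisions -/

/-- The `m`-subdivision of a graph `G`: every edge is replaced by a path with `m` edges,
introducing `m - 1` new internal vertices on each edge. -/
def Subdivision {V : Type*} (G : SimpleGraph V) (m : ℕ) :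
    SimpleGraph (V ⊕ (G.edgeSet × Fin (m - 1))) :=
  SimpleGraph.fromRel fun x y =>
    match x, y with
    | Sum.inl a, Sum.inl b => m = 1 ∧ G.Adj a b
    | Sum.inl a, Sum.inr (e, k) =>
        (k.val = 0 ∧ a = (Quot.out (e : Sym2 V)).1) ∨
        (k.val = m - 2 ∧ a = (Quot.out (e : Sym2 V)).2)
    | Sum.inr (e, k), Sum.inr (e', k') => e = e' ∧ k'.val = k.val + 1
    | Sum.inr _, Sum.inl _ => False

/-! ### Sphere packings -/

/-- A packing of balls in `ℝ^d`, indexed by `ι`: closed balls with positive radii and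
pairwise disjoint interiors. -/
structure BallPacking (d : ℕ) (ι : Type) where
  center : ι → EuclideanSpace ℝ (Fin d)
  radius : ι → ℝ
  radius_pos : ∀ i, 0 < radius i
  interior_disjoint : Pairwise fun i j =>
    Disjoint (Metric.ball (center i) (radius i)) (Metric.ball (center j) (radius j))

/-- The closed ball with index `i` in the packing. -/
def BallPacking.cball {d : ℕ} {ι : Type} (P : BallPacking d ι) (i : ι) :
    Set (EuclideanSpace ℝ (Fin d)) :=
  Metric.closedBall (P.center i) (P.radius i)

/-- The tangency graph of a ball packing: two balls are adjacent when they intersect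
in exactly one point. -/
def BallPacking.tangencyGraph {d : ℕ} {ι : Type} (P : BallPacking d ι) : SimpleGraph ι where
  Adj i j := i ≠ j ∧ ∃ p, P.cball i ∩ P.cball j = {p}
  symm := by
    constructor
    rintro i j ⟨hij, p, hp⟩
    exact ⟨hij.symm, p, by rwa [Set.inter_comm]⟩
  loopless := ⟨fun i h => h.1 rfl⟩

/-- `G` is `M`-uniformly sphere-packed in `ℝ^d`: `G` is isomorphic to the tangency graph of
a packing of interior-disjoint closed balls in which the ratio of radii of any two
tangent balls lies in `[1/M, M]`. -/
def IsUniformlySpherePacked (d : ℕ) (M : ℝ) {V : Type*} (G : SimpleGraph V) : Prop :=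
  ∃ (ι : Type) (P : BallPacking d ι), Nonempty (G ≃g P.tangencyGraph) ∧
    ∀ i j, P.tangencyGraph.Adj i j → P.radius i / P.radius j ∈ Set.Icc M⁻¹ M

/-! ### Tiles and tilings -/

/-- An axis-parallel closed hyperrectangle in `ℝ^d`, recorded by its lower and upper corners. -/
structure Tile (d : ℕ) where
  lower : Fin d → ℝ
  upper : Fin d → ℝ

/-- The subset of `ℝ^d` occupied by a tile. -/
def Tile.toSet {d : ℕ} (A : Tile d) : Set (EuclideanSpace ℝ (Fin d)) :=
  {x | ∀ i, x i ∈ Set.Icc (A.lower i) (A.upper i)}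

/-- The (open) interior of a tile. -/
def Tile.inner {d : ℕ} (A : Tile d) : Set (EuclideanSpace ℝ (Fin d)) :=
  {x | ∀ i, x i ∈ Set.Ioo (A.lower i) (A.upper i)}

/-- The side length of a tile along the `i`-th axis. -/
def Tile.len {d : ℕ} (A : Tile d) (i : Fin d) : ℝ := A.upper i - A.lower i

/-- Two tiles intersect in a set of nonzero `(d-1)`-dimensional volume: there is exactly one
coordinate in which their ranges meet in a single point, while in all other coordinates
their ranges overlap in a nondegenerate interval. -/
def Tile.Tangent {d : ℕ} (A B : Tile d) : Prop :=
  ∃ i, max (A.lower i) (B.lower i) = min (A.upper i) (B.upper i) ∧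
    ∀ j, j ≠ i → max (A.lower j) (B.lower j) < min (A.upper j) (B.upper j)

/-- The tangency graph of a collection of tiles: an edge between distinct tiles whose
intersection has nonzero `(d-1)`-dimensional volume. -/
def tangencyGraph {d : ℕ} (T : Set (Tile d)) : SimpleGraph T where
  Adj A B := A ≠ B ∧ (Tile.Tangent A.1 B.1 ∨ Tile.Tangent B.1 A.1)
  symm := by constructor; rintro A B ⟨h1, h2⟩; exact ⟨h1.symm, h2.symm⟩
  loopless := ⟨fun A h => h.1 rfl⟩

/-- The unit cube `[0,1]^d`. -/
def unitCube (d : ℕ) : Set (EuclideanSpace ℝ (Fin d)) :=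
  {x | ∀ i, x i ∈ Set.Icc (0:ℝ) 1}

/-- `T` is a tiling of the unit cube `[0,1]^d`: a finite collection of nondegenerate tiles with
pairwise disjoint interiors whose union is `[0,1]^d`. -/
def IsUnitTiling (d : ℕ) (T : Set (Tile d)) : Prop :=
  T.Finite ∧ (∀ A ∈ T, ∀ i, A.lower i < A.upper i) ∧
    (T.Pairwise fun A B => Disjoint A.inner B.inner) ∧
    (⋃ A ∈ T, A.toSet) = unitCube d

/-- The product of two tiles: a scaled copy of `B` placed inside `A`. -/
def tileProd {d : ℕ} (A B : Tile d) : Tile d where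
  lower := fun i => A.lower i + B.lower i * A.len i
  upper := fun i => A.lower i + B.upper i * A.len i

/-- The tiling product `S ∘ T`: every tile of `S` is replaced by a scaled copy of `T`. -/
def tilingProd {d : ℕ} (S T : Set (Tile d)) : Set (Tile d) :=
  Set.image2 tileProd S T

/-- The identity tiling, consisting of the single tile `[0,1]^d`. -/
def unitTile (d : ℕ) : Tile d := ⟨fun _ => 0, fun _ => 1⟩

/-- The `n`-fold iterated tiling product of `T` with itself. -/
def tilingPow {d : ℕ} (T : Set (Tile d)) : ℕ → Set (Tile d)
  | 0 => {unitTile d}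
  | n + 1 => tilingProd T (tilingPow T n)

/-- The aspect ratio `α_T` of a tiling: the maximum of `ℓ_j(A)/ℓ_j(B)` over pairs of tiles
adjacent in the tangency graph (at least `1`; equal to `1` for a single tile). -/
def tilingAlpha {d : ℕ} (T : Set (Tile d)) : ℝ :=
  sSup (insert 1 {r | ∃ A ∈ T, ∃ B ∈ T,
    (A ≠ B ∧ (Tile.Tangent A B ∨ Tile.Tangent B A)) ∧ ∃ j, r = A.len j / B.len j})

/-- `L_T`: the maximal side length appearing in the tiling `T`. -/
def tilingL {d : ℕ} (T : Set (Tile d)) : ℝ :=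
  sSup {r | ∃ A ∈ T, ∃ i, r = A.len i}

/-! ### The tilings `T_γ^{(d)}` and related quantities -/

/-- The tensor product of two sequences: `γ ⊗ γ' = ⟨γ_1γ'_1, …, γ_1γ'_b, …, γ_aγ'_1, …, γ_aγ'_b⟩`. -/
def tensorSeq (γ γ' : List ℕ) : List ℕ :=
  γ.flatMap fun g => γ'.map fun g' => g * g'

/-- The `n`-fold tensor power of the sequence `γ` (with `γ^{⊗0} = ⟨1⟩`). -/
def tensorPow (γ : List ℕ) : ℕ → List ℕ
  | 0 => [1]
  | n + 1 => tensorSeq γ (tensorPow γ n)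

/-- One tile of the tiling `T_γ^{(d)}`: the cell at grid position `v` inside the `i`-th slab. -/
def seqTile (d : ℕ) (γ : List ℕ) (i : Fin γ.length) (v : Fin d → ℕ) : Tile d where
  lower := fun j => if j.val < d - 1 then (v j : ℝ) / (γ.get i : ℝ)
    else (i.val : ℝ) / (γ.length : ℝ)
  upper := fun j => if j.val < d - 1 then ((v j : ℝ) + 1) / (γ.get i : ℝ)
    else ((i.val : ℝ) + 1) / (γ.length : ℝ)

/-- The tiling `T_γ^{(d)}` of `[0,1]^d`: for each `1 ≤ i ≤ b`, the slab
`[0,1]^{d-1} × [(i-1)/b, i/b]` is tiled by a `γ_i × ⋯ × γ_i` grid of translates of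
`[0,1/γ_i]^{d-1} × [0,1/b]`. -/
def seqTiling (d : ℕ) (γ : List ℕ) : Set (Tile d) :=
  {A | ∃ (i : Fin γ.length) (v : Fin d → ℕ),
    (∀ j : Fin d, (j.val < d - 1 → v j < γ.get i) ∧ (¬ j.val < d - 1 → v j = 0)) ∧
    A = seqTile d γ i v}

/-- `|γ|^{(d)} = γ_1^{d-1} + ⋯ + γ_b^{d-1}`, the number of tiles of `T_γ^{(d)}`. -/
def seqSize (d : ℕ) (γ : List ℕ) : ℕ := (γ.map fun g => g ^ (d - 1)).sum

/-- The growth exponent `k^{(d)}(γ) = log(|γ|^{(d)}) / log |γ|`. -/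
def growthExp (d : ℕ) (γ : List ℕ) : ℝ :=
  Real.log (seqSize d γ) / Real.log (γ.length : ℝ)

/-- The exponent `s(d,k) = d - 1 + (k - d)(1 - 1/(d-1))`. -/
def sdk (d : ℕ) (k : ℝ) : ℝ := (d : ℝ) - 1 + (k - (d : ℝ)) * (1 - 1 / ((d : ℝ) - 1))

/-- The sequence `γ^{(p,q,h)} = ⟨b, tb, …, tb, b⟩` with `b = h^{q(d-1)}`, `t = h^{p-dq}`,
and `b - 2` middle entries. -/
def gammaSeq (d p q h : ℕ) : List ℕ :=
  [h ^ (q * (d - 1))] ++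
    List.replicate (h ^ (q * (d - 1)) - 2) (h ^ (p - d * q) * h ^ (q * (d - 1))) ++
    [h ^ (q * (d - 1))]

/-! ### The infinite cube packing `Ŝ` and the graph `Ĝ_γ^{(d)}` -/

/-- The cube packing `Ŝ_n` in `ℝ^d`: for each `1 ≤ i ≤ b^n`, the slab
`[0,γ_1^n]^{d-1} × [h_{i-1}, h_i]` is tiled by a grid of cubes of side
`s_i = γ_1^n / (γ^{⊗n})_i`, where `h_i = s_1 + ⋯ + s_i`. -/
def hatTiles (d : ℕ) (γ : List ℕ) (n : ℕ) : Set (Tile d) :=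
  {A | ∃ (i : Fin (tensorPow γ n).length) (v : Fin d → ℕ),
    (∀ j : Fin d, (j.val < d - 1 → v j < (tensorPow γ n).get i) ∧
      (¬ j.val < d - 1 → v j = 0)) ∧
    A = { lower := fun j => if j.val < d - 1
            then (v j : ℝ) * (((γ.headI : ℝ) ^ n) / ((tensorPow γ n).get i : ℝ))
            else ((((tensorPow γ n).take i.val).map
              fun g => ((γ.headI : ℝ) ^ n) / (g : ℝ)).sum)
          upper := fun j => if j.val < d - 1
            then ((v j : ℝ) + 1) * (((γ.headI : ℝ) ^ n) / ((tensorPow γ n).get i : ℝ))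
            else ((((tensorPow γ n).take i.val).map
              fun g => ((γ.headI : ℝ) ^ n) / (g : ℝ)).sum) +
              ((γ.headI : ℝ) ^ n) / ((tensorPow γ n).get i : ℝ) }}

/-- The infinite nested cube packing `Ŝ = ⋃_n Ŝ_n`. -/
def hatTiling (d : ℕ) (γ : List ℕ) : Set (Tile d) := ⋃ n, hatTiles d γ n

/-- The infinite tangency graph `Ĝ_γ^{(d)}`. -/
def hatGraph (d : ℕ) (γ : List ℕ) : SimpleGraph (hatTiling d γ) :=
  tangencyGraph (hatTiling d γ)

/-! ### Projections -/

/-- The projection of a tile onto its last `d - 1` coordinates. -/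
def projTile {d : ℕ} (A : Tile d) : Tile (d - 1) where
  lower := fun j => A.lower ⟨j.val + 1, by have := j.isLt; omega⟩
  upper := fun j => A.upper ⟨j.val + 1, by have := j.isLt; omega⟩

/-! ### Cubes, facets and neat cube packings -/

/-- The facet of a tile in direction `i` (upper facet if `s = true`, lower if `s = false`). -/
def Tile.facet {d : ℕ} (A : Tile d) (i : Fin d) (s : Bool) :
    Set (EuclideanSpace ℝ (Fin d)) :=
  {x ∈ A.toSet | x i = if s then A.upper i else A.lower i}

/-- A tile is a (nondegenerate) cube when all its side lengths are equal and positive. -/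
def Tile.IsCube {d : ℕ} (A : Tile d) : Prop :=
  (∀ i j, A.len i = A.len j) ∧ ∀ i, 0 < A.len i

/-- The side length of a cube. -/
def Tile.side {d : ℕ} (A : Tile d) : ℝ := sSup (Set.range A.len)

/-- Two cubes are neatly tangent: they have disjoint interiors and, whenever they intersect
along `(d-1)`-dimensional faces `F_A ⊆ A` and `F_B ⊆ B`, either `F_A ⊆ A ∩ B` or
`F_B ⊆ A ∩ B`. -/
def NeatlyTangent {d : ℕ} (A B : Tile d) : Prop :=
  Disjoint A.inner B.inner ∧
    ∀ (i : Fin d) (sa sb : Bool),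
      (Tile.Tangent A B ∨ Tile.Tangent B A) →
      A.toSet ∩ B.toSet ⊆ A.facet i sa ∩ B.facet i sb →
      (A.facet i sa ⊆ A.toSet ∩ B.toSet ∨ B.facet i sb ⊆ A.toSet ∩ B.toSet)

/-- A neat cube packing: a collection of closed axis-parallel cubes, every two of which are
either neatly tangent or disjoint. -/
def IsNeatCubePacking {d : ℕ} (C : Set (Tile d)) : Prop :=
  (∀ A ∈ C, A.IsCube) ∧
    C.Pairwise fun A B => NeatlyTangent A B ∨ Disjoint A.toSet B.toSet

/-- `G` admits an `α`-uniform neat cube packing in `ℝ^d`: `G` is isomorphic to the tangency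
graph of a neat cube packing of aspect ratio at most `α`. -/
def AdmitsNeatCubePacking (d : ℕ) (α : ℝ) {V : Type*} (G : SimpleGraph V) : Prop :=
  ∃ C : Set (Tile d), IsNeatCubePacking C ∧
    (∀ A ∈ C, ∀ B ∈ C, (A.toSet ∩ B.toSet).Nonempty → A.side ≤ α * B.side) ∧
    Nonempty (G ≃g tangencyGraph C)

/-- The cube `[a_1, a_1 + ℓ] × ⋯ × [a_d, a_d + ℓ]`, as a tile. -/
def cubeTile (d : ℕ) (a : EuclideanSpace ℝ (Fin d)) (ℓ : ℝ) : Tile d :=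
  ⟨fun i => a i, fun i => a i + ℓ⟩

/-- `∂_ε C` for the cube `C` with corner `a` and side `ℓ`: the boundary points `x` such that
exactly `2d - 1` of the `2d` facets `F` of `C` satisfy `dist(x, F) > εℓ`. -/
def bdryEps (d : ℕ) (a : EuclideanSpace ℝ (Fin d)) (ℓ ε : ℝ) :
    Set (EuclideanSpace ℝ (Fin d)) :=
  {x ∈ frontier (cubeTile d a ℓ).toSet |
    {p : Fin d × Bool | ε * ℓ < Metric.infDist x ((cubeTile d a ℓ).facet p.1 p.2)}.ncard
      = 2 * d - 1}

/-- The star graph with center `none` and leaves `some i`. -/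
def starGraph (ι : Type) : SimpleGraph (Option ι) where
  Adj x y := (x = none ∧ y ≠ none) ∨ (y = none ∧ x ≠ none)
  symm := by constructor; rintro x y (⟨h1, h2⟩ | ⟨h1, h2⟩) <;> [exact Or.inr ⟨h1, h2⟩; exact Or.inl ⟨h1, h2⟩]
  loopless := by constructor; rintro x (⟨h1, h2⟩ | ⟨h1, h2⟩) <;> exact h2 h1

/-!
In `T_δ` two tangent tiles lie in the same or in adjacent slabs, so every ratio `ℓ_j(A)/ℓ_j(B)`
of tangent tiles is `1` or `δ_k/δ_i` with `|k - i| = 1`; conversely the corner tiles of two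
adjacent slabs realize both ratios of the corresponding entries. Hence `α_{T_δ}` is the least
`α ≥ 1` bounding all ratios of adjacent entries of `δ`. Adjacent entries of `γ ⊗ ε` are
`g ε_k, g ε_{k+1}` or `g ε_last, g' ε_first` with `g, g'` adjacent in `γ`; since `ε_first = ε_last`
for every tensor power of `γ` when `γ_1 = γ_b`, their ratios are ratios of adjacent entries of
`ε` or of `γ`, and induction on `n` gives the bound.
-/

lemma Tile.Tangent.max_lower_le_min_upper {d : ℕ} {A B : Tile d} (h : A.Tangent B) (k : Fin d) :
    max (A.lower k) (B.lower k) ≤ min (A.upper k) (B.upper k) := by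
  obtain ⟨i, hi, hj⟩ := h
  by_cases hki : k = i
  · exact hki ▸ hi.le
  · exact (hj k hki).le

def tangentRatios {d : ℕ} (T : Set (Tile d)) : Set ℝ :=
  {r | ∃ A ∈ T, ∃ B ∈ T, (A ≠ B ∧ (Tile.Tangent A B ∨ Tile.Tangent B A)) ∧
    ∃ j, r = A.len j / B.len j}

lemma tilingAlpha_eq_sSup {d : ℕ} (T : Set (Tile d)) :
    tilingAlpha T = sSup (insert 1 (tangentRatios T)) := rfl

def RatioWithin (α : ℝ) (x y : ℕ) : Prop :=
  (x : ℝ) / y ≤ α ∧ (y : ℝ) / x ≤ α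

lemma RatioWithin.mul_left {α : ℝ} (hα : 0 ≤ α) {x y : ℕ} (h : RatioWithin α x y) (c : ℕ) :
    RatioWithin α (c * x) (c * y) := by
  rcases Nat.eq_zero_or_pos c with rfl | hc
  · simpa [RatioWithin] using hα
  · have hc : (c : ℝ) ≠ 0 := by positivity
    simpa only [RatioWithin, Nat.cast_mul, mul_div_mul_left _ _ hc] using h

lemma List.IsChain.div_le_of_ratioWithin {α : ℝ} (hα : 1 ≤ α) {l : List ℕ}
    (hl : l.IsChain (RatioWithin α)) {i k : ℕ} (hi : i < l.length) (hk : k < l.length)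
    (hik : i ≤ k + 1) (hki : k ≤ i + 1) : (l[k] : ℝ) / l[i] ≤ α := by
  rw [List.isChain_iff_getElem] at hl
  rcases (by omega : k = i + 1 ∨ i = k + 1 ∨ i = k) with rfl | rfl | rfl
  · exact (hl i hk).2
  · exact (hl k hi).1
  · exact (div_self_le_one _).trans hα

section SeqTiling

variable {d : ℕ} {δ : List ℕ}

lemma seqTile_lower_last (hd : 0 < d) (i : Fin δ.length) (v : Fin d → ℕ) :
    (seqTile d δ i v).lower ⟨d - 1, by omega⟩ = i / δ.length := by
  simp [seqTile]

lemma seqTile_upper_last (hd : 0 < d) (i : Fin δ.length) (v : Fin d → ℕ) :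
    (seqTile d δ i v).upper ⟨d - 1, by omega⟩ = (i + 1) / δ.length := by
  simp [seqTile]

lemma seqTile_len_of_lt (i : Fin δ.length) (v : Fin d → ℕ) {j : Fin d} (hj : j.val < d - 1) :
    (seqTile d δ i v).len j = 1 / δ[i.val] := by
  simp only [Tile.len, seqTile, if_pos hj, List.get_eq_getElem]
  ring

lemma seqTile_len_of_not_lt (i : Fin δ.length) (v : Fin d → ℕ) {j : Fin d}
    (hj : ¬ j.val < d - 1) : (seqTile d δ i v).len j = 1 / δ.length := by
  simp only [Tile.len, seqTile, if_neg hj]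
  ring

lemma seqTile_index_le_succ {i k : Fin δ.length} {v w : Fin d → ℕ} (hd : 0 < d)
    (h : (seqTile d δ k w).lower ⟨d - 1, by omega⟩ ≤ (seqTile d δ i v).upper ⟨d - 1, by omega⟩) :
    k.val ≤ i.val + 1 := by
  rw [seqTile_lower_last hd, seqTile_upper_last hd,
    div_le_div_iff_of_pos_right (by exact_mod_cast i.pos)] at h
  exact_mod_cast h

lemma upperBounds_tangentRatios_seqTiling {α : ℝ} (hα : 1 ≤ α)
    (hδ : δ.IsChain (RatioWithin α)) :
    α ∈ upperBounds (insert 1 (tangentRatios (seqTiling d δ))) := by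
  rintro r (rfl | ⟨_, ⟨i, v, -, rfl⟩, _, ⟨k, w, -, rfl⟩, ⟨-, hik⟩, j, rfl⟩)
  · exact hα
  have hd : 0 < d := j.pos
  have hlast := hik.elim (·.max_lower_le_min_upper ⟨d - 1, by omega⟩)
    fun h => by simpa only [max_comm, min_comm] using h.max_lower_le_min_upper ⟨d - 1, by omega⟩
  rw [max_le_iff, le_min_iff, le_min_iff] at hlast
  have hki : k.val ≤ i.val + 1 := seqTile_index_le_succ hd hlast.2.1
  have hik : i.val ≤ k.val + 1 := seqTile_index_le_succ hd hlast.1.2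
  by_cases hj : j.val < d - 1
  · rw [seqTile_len_of_lt _ _ hj, seqTile_len_of_lt _ _ hj, one_div, one_div, inv_div_inv]
    exact hδ.div_le_of_ratioWithin hα i.isLt k.isLt hik hki
  · rw [seqTile_len_of_not_lt _ _ hj, seqTile_len_of_not_lt _ _ hj]
    exact (div_self_le_one _).trans hα

lemma tilingAlpha_seqTiling_le {α : ℝ} (hα : 1 ≤ α) (hδ : δ.IsChain (RatioWithin α)) :
    tilingAlpha (seqTiling d δ) ≤ α :=
  csSup_le (Set.insert_nonempty _ _) (upperBounds_tangentRatios_seqTiling hα hδ)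

lemma natCast_div_le_sum {l : List ℕ} {x : ℕ} (hx : x ∈ l) (y : ℕ) : (x : ℝ) / y ≤ l.sum := by
  rcases Nat.eq_zero_or_pos y with rfl | hy
  · simp only [Nat.cast_zero, div_zero]
    exact Nat.cast_nonneg _
  · calc (x : ℝ) / y ≤ x := div_le_self (Nat.cast_nonneg x) (by exact_mod_cast hy)
      _ ≤ l.sum := by exact_mod_cast List.le_sum_of_mem hx

lemma bddAbove_tangentRatios_seqTiling :
    BddAbove (insert 1 (tangentRatios (seqTiling d δ))) := by
  refine ⟨δ.sum + 1,
    upperBounds_tangentRatios_seqTiling (le_add_of_nonneg_left (Nat.cast_nonneg _)) ?_⟩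
  refine List.isChain_iff_getElem.mpr fun i hi => ⟨?_, ?_⟩ <;>
    exact (natCast_div_le_sum (List.getElem_mem _) _).trans (le_add_of_nonneg_right zero_le_one)

lemma one_le_tilingAlpha_seqTiling : 1 ≤ tilingAlpha (seqTiling d δ) :=
  le_csSup bddAbove_tangentRatios_seqTiling (Set.mem_insert _ _)

lemma seqTile_zero_mem (hpos : ∀ x ∈ δ, 0 < x) (i : Fin δ.length) :
    seqTile d δ i 0 ∈ seqTiling d δ :=
  ⟨i, 0, fun _ => ⟨fun _ => hpos _ (List.get_mem _ _), fun _ => rfl⟩, rfl⟩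

lemma seqTile_zero_tangent_succ (hd : 0 < d) (hpos : ∀ x ∈ δ, 0 < x) {i : ℕ}
    (hi : i + 1 < δ.length) :
    (seqTile d δ ⟨i, by omega⟩ 0).Tangent (seqTile d δ ⟨i + 1, hi⟩ 0) := by
  refine ⟨⟨d - 1, by omega⟩, ?_, fun j hj => ?_⟩
  · rw [seqTile_lower_last (by omega), seqTile_lower_last (by omega),
      seqTile_upper_last (by omega), seqTile_upper_last (by omega)]
    push_cast
    rw [max_eq_right (by gcongr; linarith), min_eq_left (by gcongr; linarith)]
  · have hj : j.val < d - 1 := by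
      have : j.val ≠ d - 1 := fun h => hj (Fin.ext h)
      omega
    simp only [seqTile, if_pos hj, Pi.zero_apply, Nat.cast_zero, zero_div, max_self, zero_add]
    exact lt_min (by simpa using hpos _ (List.getElem_mem _))
      (by simpa using hpos _ (List.getElem_mem _))

lemma isChain_ratioWithin_tilingAlpha_seqTiling (hd : 2 ≤ d) (hpos : ∀ x ∈ δ, 0 < x) :
    δ.IsChain (RatioWithin (tilingAlpha (seqTiling d δ))) := by
  refine List.isChain_iff_getElem.mpr fun i hi => ?_
  set A := seqTile d δ ⟨i, by omega⟩ 0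
  set B := seqTile d δ ⟨i + 1, hi⟩ 0
  have hA : A ∈ seqTiling d δ := seqTile_zero_mem hpos _
  have hB : B ∈ seqTiling d δ := seqTile_zero_mem hpos _
  have hAB : A ≠ B := fun h => by
    have := congrArg (fun t : Tile d => t.lower ⟨d - 1, by omega⟩) h
    simp only [A, B, seqTile_lower_last (by omega : 0 < d)] at this
    rw [div_left_inj' (Nat.cast_ne_zero.mpr (by omega))] at this
    norm_cast at this
    omega
  have htan : A.Tangent B := seqTile_zero_tangent_succ (by omega) hpos hi
  have hlen : ∀ k : Fin δ.length, (seqTile d δ k 0).len ⟨0, by omega⟩ = 1 / δ[k.val] :=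
    fun k => seqTile_len_of_lt k 0 (show 0 < d - 1 by omega)
  rw [tilingAlpha_eq_sSup]
  constructor
  · refine le_csSup bddAbove_tangentRatios_seqTiling (Set.mem_insert_of_mem _
      ⟨B, hB, A, hA, ⟨hAB.symm, Or.inr htan⟩, ⟨0, by omega⟩, ?_⟩)
    rw [hlen, hlen, one_div, one_div, inv_div_inv]
  · refine le_csSup bddAbove_tangentRatios_seqTiling (Set.mem_insert_of_mem _
      ⟨A, hA, B, hB, ⟨hAB, Or.inl htan⟩, ⟨0, by omega⟩, ?_⟩)
    rw [hlen, hlen, one_div, one_div, inv_div_inv]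

end SeqTiling

section TensorSeq

variable {γ ε : List ℕ}

lemma tensorSeq_cons (g : ℕ) :
    tensorSeq (g :: γ) ε = ε.map (g * ·) ++ tensorSeq γ ε := by
  simp [tensorSeq]

lemma head?_tensorSeq : (tensorSeq γ ε).head? = Option.map₂ (· * ·) γ.head? ε.head? := by
  cases γ <;> cases ε <;> simp [tensorSeq]

lemma getLast?_tensorSeq :
    (tensorSeq γ ε).getLast? = Option.map₂ (· * ·) γ.getLast? ε.getLast? := by
  induction γ with
  | nil => simp [tensorSeq]
  | cons g γ ih =>
    rw [tensorSeq_cons, List.getLast?_append, ih, List.getLast?_map]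
    cases γ with
    | nil => cases ε.getLast? <;> simp
    | cons g' γ =>
      rw [List.getLast?_cons_cons, List.getLast?_eq_some_getLast (List.cons_ne_nil g' γ)]
      cases ε.getLast? <;> simp

lemma head?_tensorPow_eq_getLast? (hfl : γ.head? = γ.getLast?) (n : ℕ) :
    (tensorPow γ n).head? = (tensorPow γ n).getLast? := by
  induction n with
  | zero => rfl
  | succ n ih => rw [tensorPow, head?_tensorSeq, getLast?_tensorSeq, hfl, ih]

variable {R : ℕ → ℕ → Prop}

lemma isChain_tensorSeq (hR : ∀ c x y, R x y → R (c * x) (c * y)) (hγ : γ.IsChain R)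
    (hε : ε.IsChain R) (hfl : ε.head? = ε.getLast?) : (tensorSeq γ ε).IsChain R := by
  induction γ with
  | nil => exact List.IsChain.nil
  | cons g γ ih =>
    rw [tensorSeq_cons, List.isChain_append, List.isChain_map]
    refine ⟨hε.imp fun x y h => hR g x y h, ih hγ.tail, ?_⟩
    intro x hx y hy
    rw [List.getLast?_map, ← hfl] at hx
    rw [head?_tensorSeq] at hy
    cases γ with
    | nil => simp at hy
    | cons g' γ =>
      obtain ⟨e, he, rfl⟩ := Option.mem_map.mp hx
      rw [List.head?_cons, Option.mem_def.mp he] at hy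
      obtain rfl : g' * e = y := Option.some_injective _ hy
      simpa only [mul_comm _ e] using hR e g g' (List.isChain_cons_cons.mp hγ).1

lemma isChain_tensorPow (hR : ∀ c x y, R x y → R (c * x) (c * y)) (hγ : γ.IsChain R)
    (hfl : γ.head? = γ.getLast?) (n : ℕ) : (tensorPow γ n).IsChain R := by
  induction n with
  | zero => exact List.isChain_singleton 1
  | succ n ih => exact isChain_tensorSeq hR hγ ih (head?_tensorPow_eq_getLast? hfl n)

end TensorSeq

theorem alpha_power_bound_general (d : ℕ) (hd : 2 ≤ d) (γ : List ℕ)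
    (hpos : ∀ x ∈ γ, 0 < x) (hfl : γ.head? = γ.getLast?) (n : ℕ) :
    tilingAlpha (seqTiling d (tensorPow γ n)) ≤ tilingAlpha (seqTiling d γ) := by
  set α := tilingAlpha (seqTiling d γ)
  have hα : 1 ≤ α := one_le_tilingAlpha_seqTiling
  have hγ : γ.IsChain (RatioWithin α) := isChain_ratioWithin_tilingAlpha_seqTiling hd hpos
  exact tilingAlpha_seqTiling_le hα
    (isChain_tensorPow (fun c _ _ h => h.mul_left (zero_le_one.trans hα) c) hγ hfl n)

/-- (Corollary 3.7). If `γ_1 = γ_b`, then `α_{T^{(d)}_{γ^{⊗n}}} ≤ α_{T^{(d)}_γ}` for `n ≥ 1`. -/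
theorem alpha_power_bound (d : ℕ) (hd : 2 ≤ d) (γ : List ℕ) (hne : γ ≠ [])
    (hpos : ∀ x ∈ γ, 0 < x) (hfl : γ.head? = γ.getLast?) (n : ℕ) (hn : 1 ≤ n) :
    tilingAlpha (seqTiling d (tensorPow γ n)) ≤ tilingAlpha (seqTiling d γ) :=
  alpha_power_bound_general d hd γ hpos hfl n

end
end

section
/- Let d ≥ 2 and let γ = ⟨γ_1,…,γ_b⟩ be a sequence of positive integers with γ_1 = γ_b = b. Then for every n ≥ 0, b^n − 1 ≤ diam(G(T^{(d)}_{γ^{⊗n}})) ≤ (d+1)·b^n. -/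
noncomputable section
open Classical

/-! The tiles of `T_γ` lie in `b = |γ|` slabs stacked along the last coordinate. Tangent tiles
lie in the same or in adjacent slabs, so a path from the bottom slab to the top one has at least
`b - 1` edges. Conversely, from any tile one can descend slab by slab to the bottom slab, which
is a `γ_1 × ⋯ × γ_1` grid whose cells are pairwise at distance at most `(d - 1)(γ_1 - 1)`. For
`γ^{⊗n}` both the length and the first entry are `b^n`, whence
`diam ≤ 2(b^n - 1) + (d - 1)(b^n - 1) ≤ (d + 1) b^n`. -/

open SimpleGraph

namespace SimpleGraph

variable {V α : Type*} {G : SimpleGraph V}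

theorem Walk.sub_le_length {f : V → ℝ} (hf : ∀ x y, G.Adj x y → f y ≤ f x + 1) {x y : V}
    (p : G.Walk x y) : f y - f x ≤ p.length := by
  induction p with
  | nil => simp
  | cons h _ ih =>
    have := hf _ _ h
    rw [Walk.length_cons]
    push_cast
    linarith

theorem Reachable.sub_le_dist {f : V → ℝ} (hf : ∀ x y, G.Adj x y → f y ≤ f x + 1)
    {x y : V} (h : G.Reachable x y) : f y - f x ≤ G.dist x y := by
  obtain ⟨p, hp⟩ := h.exists_walk_length_eq_dist
  exact hp ▸ p.sub_le_length hf

/-- The vertices are parametrized by `f` so that the potential `φ` may read data (such as grid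
coordinates) that is awkward to recover from a vertex. -/
theorem exists_walk_length_le_of_descent (f : α → V) (φ : α → ℕ) (S : Set α)
    (h : ∀ a ∉ S, ∃ b, G.Adj (f a) (f b) ∧ φ b < φ a) (a : α) :
    ∃ b ∈ S, ∃ p : G.Walk (f a) (f b), p.length ≤ φ a := by
  induction hn : φ a using Nat.strong_induction_on generalizing a with
  | _ n ih =>
    by_cases ha : a ∈ S
    · exact ⟨a, ha, .nil, by simp⟩
    obtain ⟨b, hab, hlt⟩ := h a ha
    obtain ⟨c, hc, p, hp⟩ := ih _ (hn ▸ hlt) b rfl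
    exact ⟨c, hc, .cons hab p, by rw [Walk.length_cons]; omega⟩

theorem ediam_le_of_forall_exists_walk {k : ℕ} (h : ∀ x y, ∃ p : G.Walk x y, p.length ≤ k) :
    G.ediam ≤ k :=
  ediam_le_of_edist_le fun x y =>
    let ⟨p, hp⟩ := h x y
    (edist_le p).trans (by exact_mod_cast hp)

theorem diam_le_of_ediam_le {k : ℕ} (h : G.ediam ≤ k) : G.diam ≤ k :=
  ENat.toNat_le_of_le_natCast h

end SimpleGraph

namespace Tile

variable {d : ℕ} {A B : Tile d}

theorem Tangent.max_lower_le_min_upper_s14 (h : A.Tangent B) (j : Fin d) :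
    max (A.lower j) (B.lower j) ≤ min (A.upper j) (B.upper j) := by
  obtain ⟨i, hi, hlt⟩ := h
  rcases eq_or_ne j i with rfl | hj
  · exact hi.le
  · exact (hlt j hj).le

theorem Tangent.ne (h : A.Tangent B) (hA : ∀ j, A.lower j < A.upper j) : A ≠ B := by
  rintro rfl
  obtain ⟨i, hi, -⟩ := h
  rw [max_self, min_self] at hi
  exact (hA i).ne hi

theorem tangent_of_upper_eq_lower (k : Fin d) (hA : A.lower k ≤ A.upper k)
    (hB : B.lower k ≤ B.upper k) (hk : A.upper k = B.lower k)
    (hj : ∀ j, j ≠ k → max (A.lower j) (B.lower j) < min (A.upper j) (B.upper j)) :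
    A.Tangent B :=
  ⟨k, by rw [max_eq_right (hA.trans hk.le), min_eq_left (hk.le.trans hB), hk], hj⟩

end Tile

section TangencyGraph

variable {d : ℕ} {T : Set (Tile d)}

theorem tangencyGraph_adj_lower_le_upper {A B : T} (h : (tangencyGraph T).Adj A B)
    (j : Fin d) : A.1.lower j ≤ B.1.upper j := by
  obtain ⟨-, h | h⟩ := h
  · exact le_max_left _ _ |>.trans (h.max_lower_le_min_upper_s14 j) |>.trans (min_le_right _ _)
  · exact le_max_right _ _ |>.trans (h.max_lower_le_min_upper_s14 j) |>.trans (min_le_left _ _)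

theorem tangencyGraph_adj_of_tangent {A B : T} (hA : ∀ j, A.1.lower j < A.1.upper j)
    (h : A.1.Tangent B.1) : (tangencyGraph T).Adj A B :=
  ⟨fun hAB => h.ne hA (congrArg Subtype.val hAB), Or.inl h⟩

end TangencyGraph

/-- For `w = ⌊va/c⌋`, the open cells `(w/a, (w+1)/a)` and `(v/c, (v+1)/c)` overlap. -/
theorem max_div_lt_min_div_of_nat_div {a c : ℕ} (ha : 0 < a) (hc : 0 < c) (v : ℕ) :
    max (((v * a / c : ℕ) : ℝ) / a) ((v : ℝ) / c) <
      min ((((v * a / c : ℕ) : ℝ) + 1) / a) (((v : ℝ) + 1) / c) := by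
  set w := v * a / c
  have hw : (w : ℝ) * c ≤ v * a := by exact_mod_cast Nat.div_mul_le_self (v * a) c
  have hw' : (v : ℝ) * a < w * c + c := by exact_mod_cast Nat.lt_div_mul_add hc
  have ha' : (0 : ℝ) < a := by exact_mod_cast ha
  have hc' : (0 : ℝ) < c := by exact_mod_cast hc
  refine max_lt (lt_min ?_ ?_) (lt_min ?_ ?_) <;>
    rw [div_lt_div_iff₀ (by assumption) (by assumption)] <;> nlinarith

section SeqTiling

variable {d : ℕ} {L : List ℕ}

def IsGridPos (d : ℕ) (L : List ℕ) (i : Fin L.length) (v : Fin d → ℕ) : Prop :=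
  ∀ j : Fin d, (j.val < d - 1 → v j < L.get i) ∧ (¬ j.val < d - 1 → v j = 0)

theorem IsGridPos.update {i : Fin L.length} {v : Fin d → ℕ} (hv : IsGridPos d L i v)
    {k : Fin d} (hk : k.val < d - 1) {t : ℕ} (ht : t < L.get i) :
    IsGridPos d L i (Function.update v k t) := by
  intro j
  rcases eq_or_ne j k with rfl | hjk
  · simp only [Function.update_self]
    exact ⟨fun _ => ht, fun h => absurd hk h⟩
  · simpa [Function.update_of_ne hjk] using hv j

def seqVertex (i : Fin L.length) (v : Fin d → ℕ) (hv : IsGridPos d L i v) :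
    seqTiling d L :=
  ⟨seqTile d L i v, i, v, hv, rfl⟩

theorem exists_seqVertex_eq (x : seqTiling d L) :
    ∃ (i : Fin L.length) (v : Fin d → ℕ) (hv : IsGridPos d L i v), seqVertex i v hv = x := by
  obtain ⟨_, i, v, hv, rfl⟩ := x
  exact ⟨i, v, hv, rfl⟩

variable {i : Fin L.length} {v : Fin d → ℕ} {j : Fin d}

theorem seqTile_lower_of_lt (hj : j.val < d - 1) :
    (seqTile d L i v).lower j = (v j : ℝ) / L.get i := if_pos hj

theorem seqTile_upper_of_lt (hj : j.val < d - 1) :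
    (seqTile d L i v).upper j = ((v j : ℝ) + 1) / L.get i := if_pos hj

theorem seqTile_lower_of_not_lt (hj : ¬ j.val < d - 1) :
    (seqTile d L i v).lower j = (i : ℝ) / L.length := if_neg hj

theorem seqTile_upper_of_not_lt (hj : ¬ j.val < d - 1) :
    (seqTile d L i v).upper j = ((i : ℝ) + 1) / L.length := if_neg hj

theorem seqTile_lower_lt_upper (hpos : 0 < L.get i) (j : Fin d) :
    (seqTile d L i v).lower j < (seqTile d L i v).upper j := by
  by_cases hj : j.val < d - 1
  · rw [seqTile_lower_of_lt hj, seqTile_upper_of_lt hj]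
    exact div_lt_div_of_pos_right (lt_add_one _) (by exact_mod_cast hpos)
  · rw [seqTile_lower_of_not_lt hj, seqTile_upper_of_not_lt hj]
    exact div_lt_div_of_pos_right (lt_add_one _) (by exact_mod_cast i.pos)

theorem seqTile_tangent_of_succ (hpos : 0 < L.get i) {v' : Fin d → ℕ} {k : Fin d}
    (hk : k.val < d - 1) (hkv : v' k = v k + 1) (hv : ∀ j, j ≠ k → v' j = v j) :
    (seqTile d L i v).Tangent (seqTile d L i v') := by
  refine Tile.tangent_of_upper_eq_lower k (seqTile_lower_lt_upper hpos k).le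
    (seqTile_lower_lt_upper hpos k).le ?_ fun j hj => ?_
  · rw [seqTile_upper_of_lt hk, seqTile_lower_of_lt hk, hkv, Nat.cast_succ]
  · have hl : (seqTile d L i v').lower j = (seqTile d L i v).lower j := by
      simp [seqTile, hv j hj]
    have hu : (seqTile d L i v').upper j = (seqTile d L i v).upper j := by
      simp [seqTile, hv j hj]
    rw [hl, hu, max_self, min_self]
    exact seqTile_lower_lt_upper hpos j

theorem seqTile_tangent_of_slab_succ (hd : 0 < d) {i' : Fin L.length} (hi : (i' : ℕ) = i + 1)
    (hpos : ∀ x ∈ L, 0 < x) {v' : Fin d → ℕ}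
    (hov : ∀ j : Fin d, j.val < d - 1 → max ((v j : ℝ) / L.get i) ((v' j : ℝ) / L.get i') <
      min (((v j : ℝ) + 1) / L.get i) (((v' j : ℝ) + 1) / L.get i')) :
    (seqTile d L i v).Tangent (seqTile d L i' v') := by
  have hlast : ¬ (⟨d - 1, by omega⟩ : Fin d).val < d - 1 := lt_irrefl _
  refine Tile.tangent_of_upper_eq_lower ⟨d - 1, by omega⟩
    (seqTile_lower_lt_upper (hpos _ (L.get_mem i)) _).le
    (seqTile_lower_lt_upper (hpos _ (L.get_mem i')) _).le ?_ fun j hj => ?_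
  · rw [seqTile_upper_of_not_lt hlast, seqTile_lower_of_not_lt hlast, hi, Nat.cast_succ]
  · have hj' : j.val < d - 1 := by
      have := j.isLt
      have : j.val ≠ d - 1 := fun h => hj (Fin.ext h)
      omega
    rw [seqTile_lower_of_lt hj', seqTile_lower_of_lt hj', seqTile_upper_of_lt hj',
      seqTile_upper_of_lt hj']
    exact hov j hj'

end SeqTiling

section SeqTilingGraph

variable {d : ℕ} {L : List ℕ}

theorem seqTiling_upper_eq_lower_add {A : Tile d} (hA : A ∈ seqTiling d L) {j : Fin d}
    (hj : ¬ j.val < d - 1) : A.upper j = A.lower j + 1 / L.length := by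
  obtain ⟨i, v, -, rfl⟩ := hA
  rw [seqTile_upper_of_not_lt hj, seqTile_lower_of_not_lt hj, add_div]

theorem seqVertex_adj_of_succ (hpos : ∀ x ∈ L, 0 < x) {i : Fin L.length} {v v' : Fin d → ℕ}
    (hv : IsGridPos d L i v) (hv' : IsGridPos d L i v') {k : Fin d} (hk : k.val < d - 1)
    (hkv : v' k = v k + 1 ∨ v k = v' k + 1) (hrest : ∀ j, j ≠ k → v' j = v j) :
    (tangencyGraph (seqTiling d L)).Adj (seqVertex i v hv) (seqVertex i v' hv') := by
  have hi := hpos _ (L.get_mem i)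
  rcases hkv with hkv | hkv
  · exact tangencyGraph_adj_of_tangent (seqTile_lower_lt_upper hi)
      (seqTile_tangent_of_succ hi hk hkv hrest)
  · exact (tangencyGraph_adj_of_tangent (seqTile_lower_lt_upper hi)
      (seqTile_tangent_of_succ hi hk hkv fun j hj => (hrest j hj).symm)).symm

/-- Below every cell of slab `i + 1` lies the cell of slab `i` containing its lower-left corner
in the horizontal coordinates. -/
theorem exists_adj_seqVertex_of_slab_succ (hd : 0 < d) (hpos : ∀ x ∈ L, 0 < x)
    {i i' : Fin L.length} (hi : (i' : ℕ) = i + 1) {v : Fin d → ℕ} (hv : IsGridPos d L i' v) :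
    ∃ (w : Fin d → ℕ) (hw : IsGridPos d L i w),
      (tangencyGraph (seqTiling d L)).Adj (seqVertex i w hw) (seqVertex i' v hv) := by
  have ha := hpos _ (L.get_mem i)
  have hc := hpos _ (L.get_mem i')
  let w : Fin d → ℕ := fun j => if j.val < d - 1 then v j * L.get i / L.get i' else 0
  have hw : IsGridPos d L i w := fun j => by
    refine ⟨fun hj => ?_, fun hj => if_neg hj⟩
    simp only [w, if_pos hj]
    rw [Nat.div_lt_iff_lt_mul hc, mul_comm (L.get i)]
    exact Nat.mul_lt_mul_of_pos_right ((hv j).1 hj) ha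
  refine ⟨w, hw, tangencyGraph_adj_of_tangent (seqTile_lower_lt_upper ha)
    (seqTile_tangent_of_slab_succ hd hi hpos fun j hj => ?_)⟩
  simp only [w, if_pos hj]
  exact max_div_lt_min_div_of_nat_div ha hc (v j)

theorem exists_walk_seqVertex_slab_zero (hd : 0 < d) (hpos : ∀ x ∈ L, 0 < x)
    (hL : 0 < L.length) (i : Fin L.length) (v : Fin d → ℕ) (hv : IsGridPos d L i v) :
    ∃ (w : Fin d → ℕ) (hw : IsGridPos d L ⟨0, hL⟩ w),
      ∃ p : (tangencyGraph (seqTiling d L)).Walk (seqVertex i v hv) (seqVertex ⟨0, hL⟩ w hw),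
        p.length ≤ i := by
  obtain ⟨⟨⟨i₀, w⟩, hw⟩, hi₀, p, hp⟩ := exists_walk_length_le_of_descent
    (fun c : {c : Fin L.length × (Fin d → ℕ) // IsGridPos d L c.1 c.2} =>
      seqVertex c.1.1 c.1.2 c.2) (fun c => c.1.1) {c | c.1.1.val = 0}
    (fun ⟨⟨i', v'⟩, hv'⟩ hi' => by
      obtain ⟨w, hw, hadj⟩ := exists_adj_seqVertex_of_slab_succ hd hpos
        (i := ⟨i' - 1, by omega⟩) (show (i' : ℕ) = i' - 1 + 1 by simp at hi'; omega) hv'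
      exact ⟨⟨(_, w), hw⟩, hadj.symm, show i' - 1 < (i' : ℕ) by simp at hi'; omega⟩)
    ⟨(i, v), hv⟩
  obtain rfl : i₀ = ⟨0, hL⟩ := Fin.ext hi₀
  exact ⟨w, hw, p, hp⟩

theorem exists_adj_seqVertex_sum_dist_lt (hpos : ∀ x ∈ L, 0 < x) {i : Fin L.length}
    {u w : Fin d → ℕ} (hu : IsGridPos d L i u) (hw : IsGridPos d L i w) (hne : u ≠ w) :
    ∃ (u' : Fin d → ℕ) (hu' : IsGridPos d L i u'),
      (tangencyGraph (seqTiling d L)).Adj (seqVertex i u hu) (seqVertex i u' hu') ∧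
      ∑ j with j.val < d - 1, Nat.dist (u' j) (w j) <
        ∑ j with j.val < d - 1, Nat.dist (u j) (w j) := by
  obtain ⟨k, hk⟩ := Function.ne_iff.mp hne
  have hkH : k.val < d - 1 := by
    by_contra h
    exact hk (((hu k).2 h).trans ((hw k).2 h).symm)
  obtain ⟨t, ht, hstep, hdist⟩ : ∃ t, t < L.get i ∧ (t = u k + 1 ∨ u k = t + 1) ∧
      Nat.dist t (w k) < Nat.dist (u k) (w k) := by
    have := (hu k).1 hkH
    have := (hw k).1 hkH
    rcases lt_or_gt_of_ne hk with h | h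
    · exact ⟨u k + 1, by omega, Or.inl rfl, by simp only [Nat.dist]; omega⟩
    · exact ⟨u k - 1, by omega, Or.inr (by omega), by simp only [Nat.dist]; omega⟩
  refine ⟨_, hu.update hkH ht, seqVertex_adj_of_succ hpos _ _ hkH (by simpa using hstep)
    fun j hj => Function.update_of_ne hj _ _, Finset.sum_lt_sum (fun j _ => ?_)
    ⟨k, by simpa using hkH, by simpa using hdist⟩⟩
  rcases eq_or_ne j k with rfl | hjk
  · simpa using hdist.le
  · simp [Function.update_of_ne hjk]

theorem exists_walk_seqVertex_same_slab (hpos : ∀ x ∈ L, 0 < x) (i : Fin L.length)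
    {v w : Fin d → ℕ} (hv : IsGridPos d L i v) (hw : IsGridPos d L i w) :
    ∃ p : (tangencyGraph (seqTiling d L)).Walk (seqVertex i v hv) (seqVertex i w hw),
      p.length ≤ ∑ j with j.val < d - 1, Nat.dist (v j) (w j) := by
  obtain ⟨_, rfl, p, hp⟩ := exists_walk_length_le_of_descent
    (fun u : {u // IsGridPos d L i u} => seqVertex i u.1 u.2)
    (fun u => ∑ j with j.val < d - 1, Nat.dist (u.1 j) (w j)) {⟨w, hw⟩}
    (fun ⟨u, hu⟩ hne => by
      obtain ⟨u', hu', hadj, hlt⟩ :=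
        exists_adj_seqVertex_sum_dist_lt hpos hu hw fun h => hne (by subst h; rfl)
      exact ⟨⟨u', hu'⟩, hadj, hlt⟩)
    ⟨v, hv⟩
  exact ⟨p, hp⟩

theorem sum_dist_le_of_isGridPos {i : Fin L.length} {v w : Fin d → ℕ}
    (hv : IsGridPos d L i v) (hw : IsGridPos d L i w) :
    ∑ j with j.val < d - 1, Nat.dist (v j) (w j) ≤ (d - 1) * (L.get i - 1) := by
  have hcard : (Finset.univ.filter fun j : Fin d => j.val < d - 1).card = d - 1 := by
    rw [Fin.card_filter_val_lt]
    omega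
  refine (Finset.sum_le_card_nsmul _ _ (L.get i - 1) fun j hj => ?_).trans_eq
    (by rw [hcard, smul_eq_mul])
  have hj' : j.val < d - 1 := by simpa using hj
  have := (hv j).1 hj'
  have := (hw j).1 hj'
  simp only [Nat.dist]
  omega

/-- Route: straight down to the bottom slab, across it, and straight up. -/
theorem exists_walk_seqTiling_length_le (hd : 0 < d) (hpos : ∀ x ∈ L, 0 < x) {b : ℕ}
    (hhead : L.head? = some b) (x y : seqTiling d L) :
    ∃ p : (tangencyGraph (seqTiling d L)).Walk x y,
      p.length ≤ 2 * (L.length - 1) + (d - 1) * (b - 1) := by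
  obtain ⟨ix, vx, hvx, rfl⟩ := exists_seqVertex_eq x
  obtain ⟨iy, vy, hvy, rfl⟩ := exists_seqVertex_eq y
  have hL : 0 < L.length := ix.pos
  have hb : L.get ⟨0, hL⟩ = b := by
    cases L with
    | nil => simp at hL
    | cons a t => simpa using hhead
  obtain ⟨wx, hwx, px, hpx⟩ := exists_walk_seqVertex_slab_zero hd hpos hL ix vx hvx
  obtain ⟨wy, hwy, py, hpy⟩ := exists_walk_seqVertex_slab_zero hd hpos hL iy vy hvy
  obtain ⟨pm, hpm⟩ := exists_walk_seqVertex_same_slab hpos ⟨0, hL⟩ hwx hwy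
  refine ⟨px.append (pm.append py.reverse), ?_⟩
  have := hpm.trans (sum_dist_le_of_isGridPos hwx hwy)
  rw [hb] at this
  have := ix.isLt
  have := iy.isLt
  simp only [Walk.length_append, Walk.length_reverse]
  omega

theorem seqTiling_ediam_le (hd : 0 < d) (hpos : ∀ x ∈ L, 0 < x) {b : ℕ}
    (hhead : L.head? = some b) :
    (tangencyGraph (seqTiling d L)).ediam ≤ (2 * (L.length - 1) + (d - 1) * (b - 1) : ℕ) :=
  ediam_le_of_forall_exists_walk (exists_walk_seqTiling_length_le hd hpos hhead)

/-- The slabs are stacked in the last coordinate, and each edge of the tangency graph climbs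
at most one slab. -/
theorem length_sub_one_le_seqTiling_diam (hd : 0 < d) (hpos : ∀ x ∈ L, 0 < x)
    (hfin : (tangencyGraph (seqTiling d L)).ediam ≠ ⊤) :
    L.length - 1 ≤ (tangencyGraph (seqTiling d L)).diam := by
  rcases L.length.eq_zero_or_pos with hL | hL
  · simp [hL]
  have hlast : ¬ (⟨d - 1, by omega⟩ : Fin d).val < d - 1 := lt_irrefl _
  have hzero (i : Fin L.length) : IsGridPos d L i 0 :=
    fun _ => ⟨fun _ => hpos _ (L.get_mem i), fun _ => rfl⟩
  have hL' : (0 : ℝ) < L.length := by exact_mod_cast hL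
  let height (x : seqTiling d L) : ℝ := L.length * x.1.lower ⟨d - 1, by omega⟩
  have hheight (x y) (hxy : (tangencyGraph (seqTiling d L)).Adj x y) :
      height y ≤ height x + 1 := by
    have := tangencyGraph_adj_lower_le_upper hxy.symm ⟨d - 1, by omega⟩
    rw [seqTiling_upper_eq_lower_add x.2 hlast] at this
    calc height y ≤ L.length * (x.1.lower ⟨d - 1, by omega⟩ + 1 / L.length) :=
          mul_le_mul_of_nonneg_left this hL'.le
      _ = height x + 1 := by rw [mul_add, mul_one_div_cancel hL'.ne']
  have hdist := ((preconnected_of_ediam_ne_top hfin) (seqVertex ⟨0, hL⟩ 0 (hzero _))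
    (seqVertex ⟨L.length - 1, by omega⟩ 0 (hzero _))).sub_le_dist hheight
  simp only [height, seqVertex, seqTile_lower_of_not_lt hlast, mul_div_cancel₀ _ hL'.ne',
    Nat.cast_zero, sub_zero] at hdist
  exact (Nat.cast_le.mp hdist).trans (dist_le_diam hfin)

end SeqTilingGraph

theorem tensorSeq_length (γ γ' : List ℕ) :
    (tensorSeq γ γ').length = γ.length * γ'.length := by
  simp [tensorSeq, List.length_flatMap]

theorem tensorPow_length (γ : List ℕ) (n : ℕ) : (tensorPow γ n).length = γ.length ^ n := by
  induction n with
  | zero => rfl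
  | succ n ih => rw [tensorPow, tensorSeq_length, ih, pow_succ']

theorem tensorSeq_head? {γ γ' : List ℕ} {a a' : ℕ} (h : γ.head? = some a)
    (h' : γ'.head? = some a') : (tensorSeq γ γ').head? = some (a * a') := by
  cases γ with
  | nil => simp at h
  | cons _ _ =>
    cases γ' with
    | nil => simp at h'
    | cons _ _ => simp_all [tensorSeq]

theorem tensorPow_head? {γ : List ℕ} {a : ℕ} (h : γ.head? = some a) (n : ℕ) :
    (tensorPow γ n).head? = some (a ^ n) := by
  induction n with
  | zero => rfl
  | succ n ih => rw [tensorPow, tensorSeq_head? h ih, pow_succ']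

theorem tensorPow_pos {γ : List ℕ} (hpos : ∀ x ∈ γ, 0 < x) (n : ℕ) :
    ∀ x ∈ tensorPow γ n, 0 < x := by
  induction n with
  | zero => simp [tensorPow]
  | succ n ih =>
    simp only [tensorPow, tensorSeq, List.mem_flatMap, List.mem_map]
    rintro _ ⟨g, hg, g', hg', rfl⟩
    exact Nat.mul_pos (hpos g hg) (ih g' hg')

theorem diam_bounds_general (d : ℕ) (hd : 2 ≤ d) (γ : List ℕ) (hpos : ∀ x ∈ γ, 0 < x)
    (hhead : γ.head? = some γ.length) (n : ℕ) :
    γ.length ^ n - 1 ≤ (tangencyGraph (seqTiling d (tensorPow γ n))).diam ∧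
    (tangencyGraph (seqTiling d (tensorPow γ n))).diam ≤ (d + 1) * γ.length ^ n := by
  have hd₀ : 0 < d := by omega
  have hLpos := tensorPow_pos hpos n
  have hediam := seqTiling_ediam_le hd₀ hLpos (tensorPow_head? hhead n)
  have hlower := length_sub_one_le_seqTiling_diam hd₀ hLpos
    (ne_top_of_le_ne_top (ENat.natCast_ne_top _) hediam)
  rw [tensorPow_length] at hediam hlower
  refine ⟨hlower, ?_⟩
  calc _ ≤ 2 * (γ.length ^ n - 1) + (d - 1) * (γ.length ^ n - 1) := diam_le_of_ediam_le hediam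
    _ = (d + 1) * (γ.length ^ n - 1) := by rw [← add_mul]; congr 1; omega
    _ ≤ (d + 1) * γ.length ^ n := Nat.mul_le_mul_left _ (Nat.sub_le _ _)

/-- (Lemma 3.8). If `γ_1 = γ_b = b`, then `b^n - 1 ≤ diam G(T^{(d)}_{γ^{⊗n}}) ≤ (d+1)·b^n`. -/
theorem diam_bounds (d : ℕ) (hd : 2 ≤ d) (γ : List ℕ) (hpos : ∀ x ∈ γ, 0 < x)
    (hhead : γ.head? = some γ.length) (hlast : γ.getLast? = some γ.length) (n : ℕ) :
    γ.length ^ n - 1 ≤ (tangencyGraph (seqTiling d (tensorPow γ n))).diam ∧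
    (tangencyGraph (seqTiling d (tensorPow γ n))).diam ≤ (d + 1) * γ.length ^ n :=
  diam_bounds_general d hd γ hpos hhead n

end
end
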